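/- Let c be a real number with 0 ≤ c < 1 and n a positive integer, and let G be the n×n real symmetric matrix with entries G_{ij} = c^{|i−j|}. Then every eigenvalue λ of G satisfies (1−c)/(1+c) ≤ λ ≤ (1+c)/(1−c). In particular G is positive definite. -/

import Mathlib

/-!
Run the recursion `s 0 = 0`, `s (k + 1) = c * s k + x k` on a vector `x`. The quadratic form of
`G` is then `(1 - c²) ∑ₖ s (k + 1)² + c² (s n)²` (the inverse of `G` is tridiagonal). Since
`x k = s (k + 1) - c * s k`, bounding the cross terms by `2 |s (k + 1) s k| ≤ s (k + 1)² + s k²`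
traps `∑ₖ x k²` between `(1 - c)((1 - c) S + c (s n)²)` and `(1 + c)((1 + c) S - c (s n)²)`,
where `S = ∑ₖ s (k + 1)²`; comparing with the quadratic form gives the Rayleigh quotient bounds
`(1 - c)/(1 + c)` and `(1 + c)/(1 - c)`, which confine the spectrum and force positive
definiteness.
-/

open Matrix Finset

namespace Matrix

variable {n : Type*} [Fintype n]

theorem spectrum_subset_Icc_of_dotProduct_mulVec_bounds [DecidableEq n] {A : Matrix n n ℝ}
    {a b : ℝ} (ha : ∀ v, a * (v ⬝ᵥ v) ≤ v ⬝ᵥ A *ᵥ v) (hb : ∀ v, v ⬝ᵥ A *ᵥ v ≤ b * (v ⬝ᵥ v)) :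
    spectrum ℝ A ⊆ Set.Icc a b := by
  intro μ hμ
  rw [← spectrum_toLin'] at hμ
  obtain ⟨v, hv⟩ := (Module.End.HasEigenvalue.of_mem_spectrum hμ).exists_hasEigenvector
  have hAv : A *ᵥ v = μ • v := by simpa using hv.apply_eq_smul
  have hvv : 0 < v ⬝ᵥ v := by simpa using dotProduct_star_self_pos_iff.2 hv.2
  have hquad : v ⬝ᵥ A *ᵥ v = μ * (v ⬝ᵥ v) := by rw [hAv, dotProduct_smul, smul_eq_mul]
  exact ⟨le_of_mul_le_mul_right ((ha v).trans_eq hquad) hvv,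
    le_of_mul_le_mul_right (hquad.symm.trans_le (hb v)) hvv⟩

theorem posDef_of_mul_dotProduct_self_le {A : Matrix n n ℝ} (hA : A.IsHermitian) {a : ℝ}
    (ha : 0 < a) (hle : ∀ v, a * (v ⬝ᵥ v) ≤ v ⬝ᵥ A *ᵥ v) : A.PosDef := by
  refine posDef_iff_dotProduct_mulVec.2 ⟨hA, fun v hv => ?_⟩
  have hvv : 0 < v ⬝ᵥ v := by simpa using dotProduct_star_self_pos_iff.2 hv
  simpa using (mul_pos ha hvv).trans_le (hle v)

end Matrix

def expSmooth (c : ℝ) (x : ℕ → ℝ) : ℕ → ℝ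
  | 0 => 0
  | k + 1 => c * expSmooth c x k + x k

def kmsForm (c : ℝ) (x : ℕ → ℝ) (n : ℕ) : ℝ :=
  ∑ i ∈ range n, ∑ j ∈ range n, c ^ Nat.dist i j * x i * x j

def kmsMatrix (c : ℝ) (n : ℕ) : Matrix (Fin n) (Fin n) ℝ :=
  of fun i j => c ^ Nat.dist i j

section KMS

variable {c : ℝ} (x : ℕ → ℝ)

theorem expSmooth_succ (k : ℕ) : expSmooth c x (k + 1) = c * expSmooth c x k + x k := rfl

theorem mul_expSmooth (n : ℕ) : c * expSmooth c x n = ∑ j ∈ range n, c ^ (n - j) * x j := by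
  induction n with
  | zero => simp [expSmooth]
  | succ n ih =>
    rw [expSmooth_succ, mul_add, ← mul_assoc, mul_comm c c, mul_assoc, ih, mul_sum,
      sum_range_succ, Nat.add_sub_cancel_left, pow_one]
    congr 1
    refine sum_congr rfl fun j hj => ?_
    rw [Nat.sub_add_comm (mem_range.mp hj).le, pow_succ]
    ring

theorem kmsForm_succ (n : ℕ) :
    kmsForm c x (n + 1) = kmsForm c x n + 2 * c * expSmooth c x n * x n + x n ^ 2 := by
  have hcol : ∑ i ∈ range n, c ^ Nat.dist i n * x i = c * expSmooth c x n := by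
    rw [mul_expSmooth]
    refine sum_congr rfl fun i hi => ?_
    rw [Nat.dist_eq_sub_of_le (mem_range.mp hi).le]
  have hrow : ∑ j ∈ range n, c ^ Nat.dist n j * x n * x j = c * expSmooth c x n * x n := by
    rw [← hcol, sum_mul]
    exact sum_congr rfl fun j _ => by rw [Nat.dist_comm]; ring
  simp only [kmsForm, sum_range_succ, sum_add_distrib, Nat.dist_self, pow_zero, ← sum_mul, hcol, hrow]
  ring

theorem kmsForm_eq (n : ℕ) :
    kmsForm c x n = (1 - c ^ 2) * ∑ k ∈ range n, expSmooth c x (k + 1) ^ 2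
      + c ^ 2 * expSmooth c x n ^ 2 := by
  induction n with
  | zero => simp [kmsForm, expSmooth]
  | succ n ih =>
    rw [kmsForm_succ, ih, sum_range_succ, expSmooth_succ]
    ring

theorem sum_sq_add_le_sum_expSmooth_sq (hc : 0 ≤ c) (n : ℕ) :
    ∑ k ∈ range n, x k ^ 2 + c * (1 + c) * expSmooth c x n ^ 2
      ≤ (1 + c) ^ 2 * ∑ k ∈ range n, expSmooth c x (k + 1) ^ 2 := by
  induction n with
  | zero => simp [expSmooth]
  | succ n ih =>
    rw [sum_range_succ, sum_range_succ, expSmooth_succ]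
    nlinarith [mul_nonneg hc (sq_nonneg (x n + (1 + c) * expSmooth c x n))]

theorem sum_expSmooth_sq_add_le_sum_sq (hc : 0 ≤ c) (n : ℕ) :
    (1 - c) ^ 2 * ∑ k ∈ range n, expSmooth c x (k + 1) ^ 2 + c * (1 - c) * expSmooth c x n ^ 2
      ≤ ∑ k ∈ range n, x k ^ 2 := by
  induction n with
  | zero => simp [expSmooth]
  | succ n ih =>
    rw [sum_range_succ, sum_range_succ, expSmooth_succ]
    nlinarith [mul_nonneg hc (sq_nonneg (x n - (1 - c) * expSmooth c x n))]

theorem div_mul_sum_sq_le_kmsForm (hc0 : 0 ≤ c) (hc1 : c < 1) (n : ℕ) :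
    (1 - c) / (1 + c) * ∑ k ∈ range n, x k ^ 2 ≤ kmsForm c x n := by
  have hL := sum_sq_add_le_sum_expSmooth_sq x hc0 n
  rw [kmsForm_eq, div_mul_eq_mul_div, div_le_iff₀ (by linarith)]
  nlinarith [mul_le_mul_of_nonneg_left hL (by linarith : (0 : ℝ) ≤ 1 - c),
    mul_nonneg hc0 (sq_nonneg (expSmooth c x n))]

theorem kmsForm_le_div_mul_sum_sq (hc0 : 0 ≤ c) (hc1 : c < 1) (n : ℕ) :
    kmsForm c x n ≤ (1 + c) / (1 - c) * ∑ k ∈ range n, x k ^ 2 := by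
  have hU := sum_expSmooth_sq_add_le_sum_sq x hc0 n
  rw [kmsForm_eq, div_mul_eq_mul_div, le_div_iff₀ (by linarith)]
  nlinarith [mul_le_mul_of_nonneg_left hU (by linarith : (0 : ℝ) ≤ 1 + c),
    mul_nonneg hc0 (sq_nonneg (expSmooth c x n))]

variable {n : ℕ}

theorem kmsMatrix_isHermitian : (kmsMatrix c n).IsHermitian :=
  ext fun i j => by simp [kmsMatrix, Nat.dist_comm]

theorem dotProduct_kmsMatrix_mulVec {v : Fin n → ℝ} (hv : ∀ i, v i = x i) :
    v ⬝ᵥ kmsMatrix c n *ᵥ v = kmsForm c x n := by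
  simp only [kmsForm, dotProduct, mulVec, kmsMatrix, of_apply, mul_sum, hv,
    ← Fin.sum_univ_eq_sum_range]
  exact sum_congr rfl fun i _ => sum_congr rfl fun j _ => by ring

theorem dotProduct_self_eq_sum_range {v : Fin n → ℝ} (hv : ∀ i, v i = x i) :
    v ⬝ᵥ v = ∑ k ∈ range n, x k ^ 2 := by
  simp only [dotProduct, hv, sq, ← Fin.sum_univ_eq_sum_range (fun k => x k * x k)]

theorem kmsMatrix_dotProduct_mulVec_bounds (hc0 : 0 ≤ c) (hc1 : c < 1) (v : Fin n → ℝ) :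
    (1 - c) / (1 + c) * (v ⬝ᵥ v) ≤ v ⬝ᵥ kmsMatrix c n *ᵥ v ∧
      v ⬝ᵥ kmsMatrix c n *ᵥ v ≤ (1 + c) / (1 - c) * (v ⬝ᵥ v) := by
  set x : ℕ → ℝ := fun k => if h : k < n then v ⟨k, h⟩ else 0
  have hx : ∀ i, v i = x i := fun i => by simp [x]
  rw [dotProduct_kmsMatrix_mulVec x hx, dotProduct_self_eq_sum_range x hx]
  exact ⟨div_mul_sum_sq_le_kmsForm x hc0 hc1 n, kmsForm_le_div_mul_sum_sq x hc0 hc1 n⟩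

end KMS

theorem gram_eigenvalue_bounds_general
    (c : ℝ) (hc0 : 0 ≤ c) (hc1 : c < 1) (n : ℕ)
    (G : Matrix (Fin n) (Fin n) ℝ)
    (hGdef : ∀ i j, G i j = c ^ Nat.dist i.1 j.1) :
    (∀ μ ∈ spectrum ℝ G, (1 - c) / (1 + c) ≤ μ ∧ μ ≤ (1 + c) / (1 - c)) ∧
      G.PosDef := by
  obtain rfl : G = kmsMatrix c n := ext hGdef
  have hbounds := kmsMatrix_dotProduct_mulVec_bounds (n := n) hc0 hc1
  refine ⟨fun μ hμ => spectrum_subset_Icc_of_dotProduct_mulVec_bounds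
    (fun v => (hbounds v).1) (fun v => (hbounds v).2) hμ, ?_⟩
  exact posDef_of_mul_dotProduct_self_le kmsMatrix_isHermitian
    (div_pos (by linarith) (by linarith)) fun v => (hbounds v).1

/-- every eigenvalue of the Gram matrix `G_{ij} = c^{|i−j|}` lies in the
interval `[(1−c)/(1+c), (1+c)/(1−c)]`; in particular `G` is positive definite. -/
theorem gram_eigenvalue_bounds
    (c : ℝ) (hc0 : 0 ≤ c) (hc1 : c < 1) (n : ℕ) (hn : 0 < n)
    (G : Matrix (Fin n) (Fin n) ℝ)
    (hGdef : ∀ i j, G i j = c ^ Nat.dist i.1 j.1) :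
    (∀ μ ∈ spectrum ℝ G, (1 - c) / (1 + c) ≤ μ ∧ μ ≤ (1 + c) / (1 - c)) ∧
      G.PosDef :=
  gram_eigenvalue_bounds_general c hc0 hc1 n G hGdef
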